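/- arXiv:math/0404426 — 4 statements merged into one kernel-verified Lean document; each statement's English description precedes it below -/
import Mathlib

section
/- The subgroup A ⋉ N of SO(V)_{Rp} acts simply transitively on hyperbolic space L^{n+1}: for any two points v, w ∈ L^{n+1} there is a unique element of A ⋉ N taking v to w. -/
open Matrix

/-- Index type for the basis `p, e_1, …, e_n, q` of the `(n+2)`-dimensional Minkowski space:
`Sum.inl 0` is `p`, `Sum.inr (Sum.inl i)` is `e_i`, `Sum.inr (Sum.inr 0)` is `q`. -/
abbrev Ix (n : ℕ) := Fin 1 ⊕ (Fin n ⊕ Fin 1)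

def pidx (n : ℕ) : Ix n := Sum.inl 0
def qidx (n : ℕ) : Ix n := Sum.inr (Sum.inr 0)
def midx (n : ℕ) (i : Fin n) : Ix n := Sum.inr (Sum.inl i)

/-- The Minkowski form `η` in the basis `p, e_1, …, e_n, q`:
`η(p,q) = η(q,p) = 1`, `η(e_i,e_i) = 1`, all other products zero. -/
def eta (n : ℕ) (x y : Ix n → ℝ) : ℝ :=
  x (pidx n) * y (qidx n) + x (qidx n) * y (pidx n) +
    ∑ i : Fin n, x (midx n i) * y (midx n i)

/-- The basis vector `p`. -/
def pVec (n : ℕ) : Ix n → ℝ := Pi.single (pidx n) 1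
/-- The basis vector `q`. -/
def qVec (n : ℕ) : Ix n → ℝ := Pi.single (qidx n) 1

/-- The matrix `diag(a, Id, 1/a)` (element of the group `A`). -/
noncomputable def aMat (n : ℕ) (a : ℝ) : Matrix (Ix n) (Ix n) ℝ := fun i j =>
  match i, j with
  | Sum.inl _, Sum.inl _ => a
  | Sum.inr (Sum.inl i), Sum.inr (Sum.inl j) => if i = j then 1 else 0
  | Sum.inr (Sum.inr _), Sum.inr (Sum.inr _) => a⁻¹
  | _, _ => 0

/-- The matrix `diag(1, f, 1)` (element of the group `K`). -/
def kMat (n : ℕ) (f : Matrix (Fin n) (Fin n) ℝ) : Matrix (Ix n) (Ix n) ℝ := fun i j =>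
  match i, j with
  | Sum.inl _, Sum.inl _ => 1
  | Sum.inr (Sum.inl i), Sum.inr (Sum.inl j) => f i j
  | Sum.inr (Sum.inr _), Sum.inr (Sum.inr _) => 1
  | _, _ => 0

/-- The matrix `[[1, -Xᵀ, -XᵀX/2], [0, Id, X], [0, 0, 1]]` (element of the group `N`). -/
noncomputable def nMat (n : ℕ) (X : Fin n → ℝ) : Matrix (Ix n) (Ix n) ℝ := fun i j =>
  match i, j with
  | Sum.inl _, Sum.inl _ => 1
  | Sum.inl _, Sum.inr (Sum.inl j) => -X j
  | Sum.inl _, Sum.inr (Sum.inr _) => -(∑ i : Fin n, X i * X i) / 2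
  | Sum.inr (Sum.inl _), Sum.inl _ => 0
  | Sum.inr (Sum.inl i), Sum.inr (Sum.inl j) => if i = j then 1 else 0
  | Sum.inr (Sum.inl i), Sum.inr (Sum.inr _) => X i
  | Sum.inr (Sum.inr _), Sum.inl _ => 0
  | Sum.inr (Sum.inr _), Sum.inr (Sum.inl _) => 0
  | Sum.inr (Sum.inr _), Sum.inr (Sum.inr _) => 1

/-- The identification of the Euclidean space `E` with `∂L^{n+1} \ {ℝp}`: the point `X ∈ E`
corresponds to the isotropic line spanned by `ι(X) = -(‖X‖²/2)·p + X + q`. -/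
noncomputable def iota (n : ℕ) (X : Fin n → ℝ) : Ix n → ℝ := fun i =>
  match i with
  | Sum.inl _ => -(∑ j : Fin n, X j * X j) / 2
  | Sum.inr (Sum.inl j) => X j
  | Sum.inr (Sum.inr _) => 1

/-!
Every element of `A ⋉ N` preserves `η`, and it acts on the `q`- and `e_i`-coordinates of a
point by `v_q ↦ a⁻¹ v_q` and `v_i ↦ v_i + X_i v_q`. On the upper sheet `v_q < 0`, so these
two coordinates pin down `a` and `X` uniquely given the target `w`; conversely, for that
choice the image of `v` agrees with `w` in these coordinates, and the remaining
`p`-coordinate is forced by `η(x, x) = 2 x_p x_q + ‖x_e‖² = -1`.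
-/

namespace Minkowski

variable {n : ℕ}

lemma sum_Ix (f : Ix n → ℝ) :
    ∑ i, f i = f (pidx n) + (∑ i : Fin n, f (midx n i)) + f (qidx n) := by
  rw [Fintype.sum_sum_type, Fintype.sum_sum_type, Fin.sum_univ_one, Fin.sum_univ_one]
  simp only [pidx, midx, qidx]
  ring

lemma ext_Ix {v w : Ix n → ℝ} (hp : v (pidx n) = w (pidx n))
    (hm : ∀ i, v (midx n i) = w (midx n i)) (hq : v (qidx n) = w (qidx n)) : v = w := by
  funext i
  rcases i with a | i | a
  · rw [Subsingleton.elim a 0]; exact hp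
  · exact hm i
  · rw [Subsingleton.elim a 0]; exact hq

lemma mulVec_Ix (M : Matrix (Ix n) (Ix n) ℝ) (v : Ix n → ℝ) (i : Ix n) :
    (M *ᵥ v) i = M i (pidx n) * v (pidx n) + ∑ j, M i (midx n j) * v (midx n j) +
      M i (qidx n) * v (qidx n) := by
  rw [mulVec, dotProduct, sum_Ix]

lemma eta_self (v : Ix n → ℝ) :
    eta n v v = 2 * v (pidx n) * v (qidx n) + ∑ i, v (midx n i) * v (midx n i) := by
  rw [eta]; ring

lemma eta_sub_pVec_qVec (v : Ix n → ℝ) :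
    eta n v (pVec n - qVec n) = v (qidx n) - v (pidx n) := by
  simp [eta, pVec, qVec, pidx, qidx, midx, neg_add_eq_sub]

lemma qidx_neg_of_eta {v : Ix n → ℝ} (hv : eta n v v = -1)
    (hv0 : eta n v (pVec n - qVec n) < 0) :
    v (qidx n) < 0 := by
  rw [eta_self] at hv
  rw [eta_sub_pVec_qVec] at hv0
  have : 0 ≤ ∑ i, v (midx n i) * v (midx n i) := Finset.sum_nonneg fun i _ => mul_self_nonneg _
  nlinarith

lemma eq_of_eta_self_eq {v w : Ix n → ℝ} (h : eta n v v = eta n w w)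
    (hq : v (qidx n) = w (qidx n)) (hq0 : w (qidx n) ≠ 0)
    (hm : ∀ i, v (midx n i) = w (midx n i)) : v = w := by
  refine ext_Ix ?_ hm hq
  rw [eta_self, eta_self, hq, Finset.sum_congr rfl fun i _ => by rw [hm i]] at h
  exact mul_right_cancel₀ hq0 (by linarith)

lemma nMat_mulVec_pidx (X : Fin n → ℝ) (v : Ix n → ℝ) :
    (nMat n X *ᵥ v) (pidx n) =
      v (pidx n) - ∑ j, X j * v (midx n j) - (∑ j, X j * X j) / 2 * v (qidx n) := by
  rw [mulVec_Ix]
  simp [nMat, pidx, midx, qidx]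
  ring

lemma nMat_mulVec_midx (X : Fin n → ℝ) (v : Ix n → ℝ) (i : Fin n) :
    (nMat n X *ᵥ v) (midx n i) = v (midx n i) + X i * v (qidx n) := by
  rw [mulVec_Ix]
  simp [nMat, pidx, midx, qidx, ite_mul]

lemma nMat_mulVec_qidx (X : Fin n → ℝ) (v : Ix n → ℝ) :
    (nMat n X *ᵥ v) (qidx n) = v (qidx n) := by
  rw [mulVec_Ix]
  simp [nMat, pidx, midx, qidx]

lemma aMat_mulVec_pidx (a : ℝ) (v : Ix n → ℝ) :
    (aMat n a *ᵥ v) (pidx n) = a * v (pidx n) := by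
  rw [mulVec_Ix]
  simp [aMat, pidx, midx, qidx]

lemma aMat_mulVec_midx (a : ℝ) (v : Ix n → ℝ) (i : Fin n) :
    (aMat n a *ᵥ v) (midx n i) = v (midx n i) := by
  rw [mulVec_Ix]
  simp [aMat, pidx, midx, qidx, ite_mul]

lemma aMat_mulVec_qidx (a : ℝ) (v : Ix n → ℝ) :
    (aMat n a *ᵥ v) (qidx n) = a⁻¹ * v (qidx n) := by
  rw [mulVec_Ix]
  simp [aMat, pidx, midx, qidx]

lemma eta_nMat_mulVec (X : Fin n → ℝ) (v : Ix n → ℝ) :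
    eta n (nMat n X *ᵥ v) (nMat n X *ᵥ v) = eta n v v := by
  have hsq : ∑ i, (v (midx n i) + X i * v (qidx n)) * (v (midx n i) + X i * v (qidx n)) =
      ∑ i, v (midx n i) * v (midx n i) + 2 * v (qidx n) * ∑ i, X i * v (midx n i) +
        v (qidx n) ^ 2 * ∑ i, X i * X i := by
    rw [Finset.mul_sum, Finset.mul_sum, ← Finset.sum_add_distrib, ← Finset.sum_add_distrib]
    exact Finset.sum_congr rfl fun i _ => by ring
  simp only [eta_self, nMat_mulVec_pidx, nMat_mulVec_midx, nMat_mulVec_qidx, hsq]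
  ring

lemma eta_aMat_mulVec {a : ℝ} (ha : a ≠ 0) (v : Ix n → ℝ) :
    eta n (aMat n a *ᵥ v) (aMat n a *ᵥ v) = eta n v v := by
  simp only [eta_self, aMat_mulVec_pidx, aMat_mulVec_midx, aMat_mulVec_qidx]
  field_simp

lemma aMat_mul_nMat_mulVec_midx (a : ℝ) (X : Fin n → ℝ) (v : Ix n → ℝ) (i : Fin n) :
    ((aMat n a * nMat n X) *ᵥ v) (midx n i) = v (midx n i) + X i * v (qidx n) := by
  rw [← mulVec_mulVec, aMat_mulVec_midx, nMat_mulVec_midx]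

lemma aMat_mul_nMat_mulVec_qidx (a : ℝ) (X : Fin n → ℝ) (v : Ix n → ℝ) :
    ((aMat n a * nMat n X) *ᵥ v) (qidx n) = a⁻¹ * v (qidx n) := by
  rw [← mulVec_mulVec, aMat_mulVec_qidx, nMat_mulVec_qidx]

lemma eta_aMat_mul_nMat_mulVec {a : ℝ} (ha : a ≠ 0) (X : Fin n → ℝ) (v : Ix n → ℝ) :
    eta n ((aMat n a * nMat n X) *ᵥ v) ((aMat n a * nMat n X) *ᵥ v) = eta n v v := by
  rw [← mulVec_mulVec, eta_aMat_mulVec ha, eta_nMat_mulVec]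

end Minkowski

open Minkowski in
/-- the subgroup `A ⋉ N ⊆ SO(V)_{ℝp}` (whose elements are the products
`aMat a * nMat X`, `a > 0`, `X ∈ ℝ^n`) acts simply transitively on hyperbolic space
`L^{n+1} = {x : η(x,x) = -1, η(x, p - q) < 0}` (the time-positive sheet): for any two
points `v, w ∈ L^{n+1}` there is a unique element of `A ⋉ N` taking `v` to `w`. -/
theorem stmt15 (n : ℕ) (v w : Ix n → ℝ)
    (hv : eta n v v = -1) (hv0 : eta n v (pVec n - qVec n) < 0)
    (hw : eta n w w = -1) (hw0 : eta n w (pVec n - qVec n) < 0) :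
    ∃! g : ℝ × (Fin n → ℝ),
      0 < g.1 ∧ (aMat n g.1 * nMat n g.2).mulVec v = w := by
  have hvq := qidx_neg_of_eta hv hv0
  have hwq := qidx_neg_of_eta hw hw0
  refine ⟨(v (qidx n) / w (qidx n), fun i => (w (midx n i) - v (midx n i)) / v (qidx n)),
    ⟨div_pos_of_neg_of_neg hvq hwq, ?_⟩, ?_⟩
  · dsimp only
    refine eq_of_eta_self_eq ?_ ?_ hwq.ne fun i => ?_
    · rw [eta_aMat_mul_nMat_mulVec (div_pos_of_neg_of_neg hvq hwq).ne', hv, hw]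
    · rw [aMat_mul_nMat_mulVec_qidx, inv_div, div_mul_cancel₀ _ hvq.ne]
    · rw [aMat_mul_nMat_mulVec_midx, div_mul_cancel₀ _ hvq.ne, add_sub_cancel]
  · rintro ⟨a, X⟩ ⟨-, rfl⟩
    refine Prod.ext ?_ (funext fun i => ?_) <;> dsimp only
    · rw [aMat_mul_nMat_mulVec_qidx, inv_mul_eq_div, div_div_cancel₀ hvq.ne]
    · rw [aMat_mul_nMat_mulVec_midx, add_sub_cancel_left, mul_div_cancel_right₀ _ hvq.ne]
end

section
/- For any point v = x·p + α + y·q ∈ L^{n+1} (with α ∈ E) and w = x·p + β + y·q ∈ L^{n+1} sharing the same p- and q-coordinates, the element of N with parameter X = (α − β)/y maps v to w. (Here y ≠ 0 since 2xy + η(α,α) = −1 forces y ≠ 0 when combined with membership of v in L^{n+1}.) -/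
open Matrix

/-- The vector `x·p + α + y·q` in coordinates w.r.t. the basis `p, e_1, …, e_n, q`. -/
def vecOf (n : ℕ) (x : ℝ) (α : Fin n → ℝ) (y : ℝ) : Ix n → ℝ := fun i =>
  match i with
  | Sum.inl _ => x
  | Sum.inr (Sum.inl j) => α j
  | Sum.inr (Sum.inr _) => y

theorem nMat_mulVec_vecOf (n : ℕ) (X : Fin n → ℝ) (x y : ℝ) (α : Fin n → ℝ) :
    nMat n X *ᵥ vecOf n x α y = vecOf n (x - X ⬝ᵥ α - (X ⬝ᵥ X) / 2 * y) (α + y • X) y := by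
  funext i
  rcases i with _ | i | _
  · simp only [mulVec, dotProduct, nMat, vecOf, Fintype.sum_sum_type, Fin.sum_univ_one,
      ← Finset.sum_mul]
    simp only [neg_mul, Finset.sum_neg_distrib]
    ring
  · simp [mulVec, dotProduct, nMat, vecOf, Fintype.sum_sum_type, add_comm, mul_comm]
  · simp [mulVec, dotProduct, nMat, vecOf, Fintype.sum_sum_type]

/-- for points `v = x·p + α + y·q` and `w = x·p + β + y·q` of `L^{n+1}`
(so `2xy + η(α,α) = −1 = 2xy + η(β,β)`; membership in `L^{n+1}` forces `y ≠ 0`) sharing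
the same `p`- and `q`-coordinates, the element of `N` with parameter `X = (β − α)/y`
maps `v` to `w`.  (The paper writes `X = (α − β)/y`; with the stated matrix convention
`[[1, -Xᵀ, -XᵀX/2],[0, Id, X],[0, 0, 1]]` acting on column vectors, that parameter maps
`w` to `v`, i.e. the sign is a typo; the statement formalized here is the intended one:
the displayed element of `N` carries `v` to `w`.) -/
theorem stmt16 (n : ℕ) (x y : ℝ) (α β : Fin n → ℝ)
    (hv : 2 * x * y + (∑ i : Fin n, α i * α i) = -1)
    (hw : 2 * x * y + (∑ i : Fin n, β i * β i) = -1)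
    (hy : y ≠ 0) :
    (nMat n (y⁻¹ • (β - α))).mulVec (vecOf n x α y) = vecOf n x β y := by
  have hnorm : β ⬝ᵥ β = α ⬝ᵥ α := by simp only [dotProduct]; linarith
  rw [nMat_mulVec_vecOf, smul_smul, mul_inv_cancel₀ hy, one_smul, add_sub_cancel]
  congr 1
  -- `2⟨β - α, α⟩ + ‖β - α‖² = ‖β‖² - ‖α‖² = 0`, so the `p`-coordinate is unchanged.
  simp only [smul_dotProduct, dotProduct_smul, sub_dotProduct, dotProduct_sub, smul_eq_mul,
    dotProduct_comm α β]
  field_simp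
  linear_combination -hnorm
end

section
/- Let h be a compact Lie algebra acting on a commutative Lie algebra c with [h, c] ⊆ c inside a compact Lie algebra g = h + c ⊆ so(E). Then [h, c] = 0. Equivalently: if h and c are subalgebras of so(E) (E Euclidean) with c abelian, h + c a subalgebra, and [h, c] ⊆ c, then h commutes with c. (Key step: (h + c)' = h' + [h, c] and (h + c)'' = h', but a compact Lie algebra satisfies g' = g''.) -/
open RealInnerProductSpace

lemma trace_eq_sum_inner' (n : ℕ) (T : Module.End ℝ (EuclideanSpace ℝ (Fin n))) :
    LinearMap.trace ℝ _ T =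
      ∑ i, ⟪(EuclideanSpace.basisFun (Fin n) ℝ) i, T ((EuclideanSpace.basisFun (Fin n) ℝ) i)⟫ := by
  rw [LinearMap.trace_eq_matrix_trace ℝ (EuclideanSpace.basisFun (Fin n) ℝ).toBasis, Matrix.trace]
  congr 1
  ext i
  rw [Matrix.diag_apply, LinearMap.toMatrix_apply, OrthonormalBasis.coe_toBasis,
    OrthonormalBasis.coe_toBasis_repr_apply, OrthonormalBasis.repr_apply_apply]

/-- let `h` and `c` be subalgebras of `so(E)` (skew-symmetric endomorphisms
of a Euclidean space `E`, a compact Lie algebra) with `c` abelian and `[h, c] ⊆ c` (so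
that `h + c` is a subalgebra). Then `[h, c] = 0`, i.e. `h` commutes with `c`. -/
theorem stmt17 (n : ℕ)
    (h c : Submodule ℝ (Module.End ℝ (EuclideanSpace ℝ (Fin n))))
    (hskewh : ∀ f ∈ h, ∀ x y : EuclideanSpace ℝ (Fin n), ⟪f x, y⟫ + ⟪x, f y⟫ = 0)
    (hskewc : ∀ f ∈ c, ∀ x y : EuclideanSpace ℝ (Fin n), ⟪f x, y⟫ + ⟪x, f y⟫ = 0)
    (hsubalg : ∀ f ∈ h, ∀ g ∈ h, ⁅f, g⁆ ∈ h)
    (habel : ∀ f ∈ c, ∀ g ∈ c, ⁅f, g⁆ = 0)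
    (hbr : ∀ f ∈ h, ∀ g ∈ c, ⁅f, g⁆ ∈ c) :
    ∀ f ∈ h, ∀ g ∈ c, ⁅f, g⁆ = 0 := by
  intro f hf g hg
  set k : Module.End ℝ (EuclideanSpace ℝ (Fin n)) := ⁅f, g⁆ with hk
  have hkc : k ∈ c := hbr f hf g hg
  -- k is skew
  have hskewk : ∀ x y : EuclideanSpace ℝ (Fin n), ⟪k x, y⟫ = -⟪x, k y⟫ := by
    intro x y
    have h1 := hskewh f hf (g x) y
    have h2 := hskewc g hg x (f y)
    have h3 := hskewc g hg (f x) y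
    have h4 := hskewh f hf x (g y)
    have : k x = f (g x) - g (f x) := rfl
    have hy : k y = f (g y) - g (f y) := rfl
    rw [this, hy, inner_sub_left, inner_sub_right]
    linarith
  -- trace of k*k is zero
  have htr : LinearMap.trace ℝ _ (k * k) = 0 := by
    have hgk : ⁅g, k⁆ = 0 := habel g hg k hkc
    have h1 : LinearMap.trace ℝ _ (g * (f * k)) = LinearMap.trace ℝ _ (f * (k * g)) := by
      rw [LinearMap.trace_mul_comm, mul_assoc]
    have hkk : k * k = f * (g * k) - g * (f * k) := by
      have : k = f * g - g * f := rfl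
      rw [this]; noncomm_ring
    have hgcomm : g * k = k * g := by
      have : ⁅g, k⁆ = g * k - k * g := rfl
      rw [this] at hgk
      exact sub_eq_zero.mp hgk
    rw [hkk, map_sub, h1, hgcomm]
    simp
  -- trace of k*k = -∑ ‖k e_i‖²
  set b := EuclideanSpace.basisFun (Fin n) ℝ
  have hexp : LinearMap.trace ℝ _ (k * k) = -∑ i, ⟪k (b i), k (b i)⟫ := by
    rw [trace_eq_sum_inner', ← Finset.sum_neg_distrib]
    congr 1; ext i
    have h5 : (k * k) (b i) = k (k (b i)) := rfl
    rw [h5]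
    have h6 := hskewk (b i) (k (b i))
    show ⟪b i, k (k (b i))⟫ = -⟪k (b i), k (b i)⟫
    linarith
  have hsum : ∑ i, ⟪k (b i), k (b i)⟫ = 0 := by
    rw [hexp] at htr; linarith
  have hall : ∀ i, k (b i) = 0 := by
    have hnn : ∀ i ∈ Finset.univ, (0:ℝ) ≤ ⟪k (b i), k (b i)⟫ := fun i _ => real_inner_self_nonneg
    intro i
    have := (Finset.sum_eq_zero_iff_of_nonneg hnn).mp hsum i (Finset.mem_univ i)
    exact inner_self_eq_zero.mp this
  exact b.toBasis.ext fun i => by simpa [b.coe_toBasis] using hall i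
end

section
/- Let G = (A_1 × H) ⋉ F ⊆ Sim(E) where A_1 contains a dilation x ↦ λx with λ ≠ 1 fixing the origin, and F = U^Ψ ⋉ W is a normal subgroup of G acting simply transitively on E (with E = U ⊕ W orthogonal, Ψ : U → SO(W) a homomorphism). Then U = 0, i.e. F = E is the full translation group. (Key computation: conjugating the screw isometry Ψ(u)·u·w by the dilation λ gives Ψ(u)·(λu)·(λw), and normality forces u = λu for all u ∈ U.) -/
/-- let `F = U^Ψ ⋉ W ⊆ Sim(E)` be the simply transitive group of screw
isometries given by an orthogonal decomposition `E = U ⊕ W` (`W = Uᗮ`) and an (injective,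
w.l.o.g.) homomorphism `Ψ : U → SO(W)`, and suppose `F` is normalized by a dilation
`x ↦ λ·x` with `λ > 0`, `λ ≠ 1` (as happens when `F` is a normal subgroup of a group
`G = (A₁ × H) ⋉ F ⊆ Sim(E)` with `A₁` containing such a dilation). Then `U = 0` and `F`
is the full translation group of `E`. -/
theorem stmt18 (n : ℕ) (U : Submodule ℝ (EuclideanSpace ℝ (Fin n)))
    (Ψ : U → (Uᗮ ≃ₗᵢ[ℝ] Uᗮ))
    (hΨ : ∀ u v : U, Ψ (u + v) = (Ψ u).trans (Ψ v))
    (hΨinj : Function.Injective Ψ)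
    (lam : ℝ) (hlam0 : 0 < lam) (hlam1 : lam ≠ 1)
    (F : Set (EuclideanSpace ℝ (Fin n) → EuclideanSpace ℝ (Fin n)))
    (hF : F = {f | ∃ (u : U) (w : Uᗮ), ∀ x : EuclideanSpace ℝ (Fin n),
      f x = (Ψ u (Uᗮ.orthogonalProjection x) : EuclideanSpace ℝ (Fin n)) +
        (U.orthogonalProjection x : EuclideanSpace ℝ (Fin n)) + u + w})
    (hst : ∀ x y : EuclideanSpace ℝ (Fin n), ∃! f, f ∈ F ∧ f x = y)
    (hnorm : ∀ f ∈ F, (fun x => lam • f (lam⁻¹ • x)) ∈ F) :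
    U = ⊥ ∧ F = {f | ∃ t : EuclideanSpace ℝ (Fin n), ∀ x, f x = x + t} := by
  have hlamne : lam ≠ 0 := ne_of_gt hlam0
  -- every element of U is zero
  have key : ∀ u : U, u = 0 := by
    intro u
    have hf : (fun x => (Ψ u (Uᗮ.orthogonalProjection x) : EuclideanSpace ℝ (Fin n)) +
        (U.orthogonalProjection x : EuclideanSpace ℝ (Fin n)) + u + ((0 : Uᗮ) : EuclideanSpace ℝ (Fin n))) ∈ F := by
      rw [hF]; exact ⟨u, 0, fun x => rfl⟩
    have hg := hnorm _ hf
    rw [hF] at hg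
    obtain ⟨u', w', hg⟩ := hg
    have hgx : ∀ x, (Ψ u (Uᗮ.orthogonalProjection x) : EuclideanSpace ℝ (Fin n)) +
        (U.orthogonalProjection x : EuclideanSpace ℝ (Fin n)) + lam • (u : EuclideanSpace ℝ (Fin n)) =
        (Ψ u' (Uᗮ.orthogonalProjection x) : EuclideanSpace ℝ (Fin n)) +
        (U.orthogonalProjection x : EuclideanSpace ℝ (Fin n)) + u' + w' := by
      intro x
      have h := hg x
      simp only [map_smul, Submodule.coe_smul, Submodule.coe_zero, add_zero, smul_add,
        smul_smul, mul_inv_cancel₀ hlamne, one_smul] at h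
      exact h
    -- evaluate at 0
    have h0 := hgx 0
    simp only [map_zero, Submodule.coe_zero, zero_add, add_zero] at h0
    -- h0 : lam • u = u' + w'
    have hw' : (w' : EuclideanSpace ℝ (Fin n)) = ((lam • u - u' : U) : EuclideanSpace ℝ (Fin n)) := by
      push_cast
      rw [h0]; abel
    have hw0 : (w' : EuclideanSpace ℝ (Fin n)) = 0 := by
      have hmem : (w' : EuclideanSpace ℝ (Fin n)) ∈ U := by rw [hw']; exact (lam • u - u' : U).2
      have := w'.2
      rw [Submodule.mem_orthogonal] at this
      have h2 := this _ hmem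
      rw [inner_self_eq_zero] at h2
      exact h2
    have hu' : u' = lam • u := by
      apply Subtype.ext
      have : ((u' : EuclideanSpace ℝ (Fin n)) + w') = u' + 0 := by rw [hw0]
      rw [add_zero] at this
      rw [← h0] at this
      simpa using this.symm
    have hΨeq : Ψ u = Ψ u' := by
      apply LinearIsometryEquiv.ext
      intro y
      have h := hgx (y : EuclideanSpace ℝ (Fin n))
      rw [Submodule.orthogonalProjection_mem_subspace_eq_self] at h
      have h0' : (lam • (u : EuclideanSpace ℝ (Fin n))) = (u' : EuclideanSpace ℝ (Fin n)) + w' := h0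
      rw [h0'] at h
      apply Subtype.ext
      rw [← add_assoc] at h
      exact add_right_cancel (add_right_cancel (add_right_cancel h))
    have huu : u = lam • u := by rw [← hu']; exact hΨinj hΨeq
    have : (1 - lam) • u = 0 := by
      rw [sub_smul, one_smul, ← huu, sub_self]
    rcases smul_eq_zero.mp this with h | h
    · exact absurd (by linarith [sub_eq_zero.mp h]) hlam1
    · exact h
  have hU : U = ⊥ := by
    rw [Submodule.eq_bot_iff]
    intro x hx
    exact congrArg Subtype.val (key ⟨x, hx⟩)
  have hΨ0 : ∀ y : Uᗮ, Ψ 0 y = y := by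
    intro y
    have h := hΨ 0 0
    rw [add_zero] at h
    have h2 : Ψ 0 y = Ψ 0 (Ψ 0 y) := by
      conv_lhs => rw [h]
      rfl
    exact ((Ψ 0).injective h2.symm)
  refine ⟨hU, ?_⟩
  ext f
  rw [hF]
  constructor
  · rintro ⟨u, w, h⟩
    refine ⟨(w : EuclideanSpace ℝ (Fin n)), fun x => ?_⟩
    rw [h x, key u]
    have hpU : (U.orthogonalProjection x : EuclideanSpace ℝ (Fin n)) = 0 :=
      congrArg Subtype.val (key (U.orthogonalProjection x))
    have hsum : (U.orthogonalProjection x : EuclideanSpace ℝ (Fin n)) + (Uᗮ.orthogonalProjection x : EuclideanSpace ℝ (Fin n)) = x :=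
      Submodule.starProjection_add_starProjection_orthogonal (K := U) x
    rw [hpU, zero_add] at hsum
    rw [hΨ0, hsum, hpU]
    simp
  · rintro ⟨t, h⟩
    have ht : t ∈ Uᗮ := by rw [hU, Submodule.bot_orthogonal_eq_top]; trivial
    refine ⟨0, ⟨t, ht⟩, fun x => ?_⟩
    rw [h x, hΨ0]
    have hpU : (U.orthogonalProjection x : EuclideanSpace ℝ (Fin n)) = 0 :=
      congrArg Subtype.val (key (U.orthogonalProjection x))
    have hsum : (U.orthogonalProjection x : EuclideanSpace ℝ (Fin n)) + (Uᗮ.orthogonalProjection x : EuclideanSpace ℝ (Fin n)) = x :=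
      Submodule.starProjection_add_starProjection_orthogonal (K := U) x
    rw [hpU, zero_add] at hsum
    rw [hsum, hpU]
    simp
end
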